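/- arXiv:1910.04194 — 2 statements merged into one kernel-verified Lean document; each statement's English description precedes it below -/
import Mathlib

section
/- Let A₁, …, Aₙ be d×d real symmetric positive definite matrices. The function F defined on the convex set of d×d real symmetric positive definite matrices by F(X) = ∑_{i=1}^n [ tr(Aᵢ ⊗ Aᵢ) + tr(X ⊗ X) − 2 tr( ( (Aᵢ ⊗ Aᵢ)^{1/2} (X ⊗ X) (Aᵢ ⊗ Aᵢ)^{1/2} )^{1/2} ) ] is convex. -/
open Matrix
open scoped Kronecker

/-- The (unique) positive semidefinite square root of a positive semidefinite real matrix,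
extended by zero to arbitrary matrices. -/
noncomputable def msqrt {n : Type*} [Fintype n] [DecidableEq n]
    (M : Matrix n n ℝ) : Matrix n n ℝ :=
  @dite _ (M.PosSemidef) (Classical.dec _) (fun h => (h.1.eigenvectorUnitary : Matrix n n ℝ) *
    diagonal ((↑) ∘ (√·) ∘ h.1.eigenvalues) * (star (h.1.eigenvectorUnitary : Matrix n n ℝ))) (fun _ => 0)

/-!
Since `tr (X ⊗ X) = (tr X)²` and the square root commutes with `⊗`, the `i`-th summand equals
`(tr Aᵢ)² + (tr X)² - 2 (tr √(√Aᵢ X √Aᵢ))²`. The term `(tr X)²` is convex. The fidelity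
`P ↦ (tr √P)²` is concave on positive definite matrices, being the infimum over `S ≻ 0` of the
linear functionals `T ↦ tr √S · tr (S^{-1/2} T)` (Cauchy–Schwarz, with equality at `T = S`), and
composing it with the linear map `X ↦ √Aᵢ X √Aᵢ` keeps it concave.
-/
theorem ConvexOn.fun_sum {𝕜 E β ι : Type*} [Semiring 𝕜] [PartialOrder 𝕜] [AddCommMonoid E]
    [AddCommMonoid β] [PartialOrder β] [IsOrderedAddMonoid β] [SMul 𝕜 E] [DistribMulAction 𝕜 β]
    {s : Set E} (hs : Convex 𝕜 s) (t : Finset ι) {f : ι → E → β}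
    (hf : ∀ i ∈ t, ConvexOn 𝕜 s (f i)) : ConvexOn 𝕜 s fun x => ∑ i ∈ t, f i x := by
  refine ⟨hs, fun x hx y hy a b ha hb hab => ?_⟩
  simp only [Finset.smul_sum, ← Finset.sum_add_distrib]
  exact Finset.sum_le_sum fun i hi => (hf i hi).2 hx hy ha hb hab

theorem concaveOn_of_le_linearMap {𝕜 E : Type*} [CommSemiring 𝕜] [PartialOrder 𝕜]
    [IsOrderedRing 𝕜] [AddCommMonoid E] [Module 𝕜 E] {s : Set E} (hs : Convex 𝕜 s) {f : E → 𝕜}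
    (L : E → E →ₗ[𝕜] 𝕜) (hle : ∀ x ∈ s, ∀ y ∈ s, f y ≤ L x y) (heq : ∀ x ∈ s, L x x = f x) :
    ConcaveOn 𝕜 s f := by
  refine ⟨hs, fun x hx y hy a b ha hb hab => ?_⟩
  have hz := hs hx hy ha hb hab
  calc a • f x + b • f y ≤ a • L (a • x + b • y) x + b • L (a • x + b • y) y := by
        gcongr
        exacts [hle _ hz _ hx, hle _ hz _ hy]
    _ = f (a • x + b • y) := by rw [← map_smul, ← map_smul, ← map_add, heq _ hz]

theorem Matrix.trace_transpose_mul_sq_le {m n R : Type*} [Fintype m] [Fintype n] [CommRing R]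
    [LinearOrder R] [IsStrictOrderedRing R] (A B : Matrix m n R) :
    (Aᵀ * B).trace ^ 2 ≤ (Aᵀ * A).trace * (Bᵀ * B).trace := by
  simp only [← vec_dotProduct_vec, dotProduct, ← sq]
  exact Finset.sum_mul_sq_le_sq_mul_sq _ _ _

open scoped ComplexOrder in
theorem Matrix.convex_setOf_posDef {n 𝕜 : Type*} [Fintype n] [RCLike 𝕜] :
    Convex ℝ {X : Matrix n n 𝕜 | X.PosDef} :=
  convex_iff_forall_pos.mpr fun _ hX _ hY _ _ ha hb _ => (hX.smul ha).add (hY.smul hb)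

theorem Matrix.convexOn_sq_trace {n 𝕜 : Type*} [Fintype n] [Field 𝕜] [LinearOrder 𝕜]
    [IsStrictOrderedRing 𝕜] : ConvexOn 𝕜 Set.univ fun X : Matrix n n 𝕜 => X.trace ^ 2 :=
  (even_two.convexOn_pow (𝕜 := 𝕜)).comp_linearMap (traceLinearMap n 𝕜 𝕜)

open scoped MatrixOrder

namespace Matrix

variable {n : Type*} [Fintype n] [DecidableEq n]

theorem transpose_cfcSqrt (M : Matrix n n ℝ) : (CFC.sqrt M)ᵀ = CFC.sqrt M := by
  rw [← conjTranspose_eq_transpose_of_trivial]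
  exact (CFC.sqrt_nonneg M).posSemidef.isHermitian

/-- Cauchy–Schwarz for `tr √T = tr (S^{1/4} · S^{-1/4} √T)`. -/
theorem sq_trace_cfcSqrt_le {S T : Matrix n n ℝ} (hS : S.PosDef) (hT : T.PosSemidef) :
    (CFC.sqrt T).trace ^ 2 ≤ (CFC.sqrt S).trace * ((CFC.sqrt S)⁻¹ * T).trace := by
  set u := CFC.sqrt (CFC.sqrt S)
  set t := CFC.sqrt T
  have hu : IsUnit u.det := (isUnit_iff_isUnit_det u).mp hS.isStrictlyPositive.sqrt.sqrt.isUnit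
  have huu : u * u = CFC.sqrt S := CFC.sqrt_mul_sqrt_self _ (CFC.sqrt_nonneg S)
  have htt : t * t = T := CFC.sqrt_mul_sqrt_self _ hT.nonneg
  have huT : uᵀ = u := transpose_cfcSqrt _
  have htT : tᵀ = t := transpose_cfcSqrt _
  have hcs := trace_transpose_mul_sq_le u (u⁻¹ * t)
  have hut : uᵀ * (u⁻¹ * t) = t := by
    rw [huT, mul_nonsing_inv_cancel_left _ _ hu]
  have hrest : ((u⁻¹ * t)ᵀ * (u⁻¹ * t)).trace = ((CFC.sqrt S)⁻¹ * T).trace := by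
    calc ((u⁻¹ * t)ᵀ * (u⁻¹ * t)).trace = ((u * u)⁻¹ * (t * t)).trace := by
          rw [transpose_mul, transpose_nonsing_inv, huT, htT, mul_assoc,
            trace_mul_comm, Matrix.mul_inv_rev]
          simp only [mul_assoc]
      _ = ((CFC.sqrt S)⁻¹ * T).trace := by rw [huu, htt]
  rwa [hut, huT, huu, hrest] at hcs

theorem trace_inv_cfcSqrt_mul_self {S : Matrix n n ℝ} (hS : S.PosDef) :
    ((CFC.sqrt S)⁻¹ * S).trace = (CFC.sqrt S).trace := by
  have hu : IsUnit (CFC.sqrt S).det :=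
    (isUnit_iff_isUnit_det _).mp hS.isStrictlyPositive.sqrt.isUnit
  nth_rw 2 [← CFC.sqrt_mul_sqrt_self S hS.posSemidef.nonneg]
  rw [nonsing_inv_mul_cancel_left _ _ hu]

theorem concaveOn_sq_trace_cfcSqrt :
    ConcaveOn ℝ {P : Matrix n n ℝ | P.PosDef} fun P => (CFC.sqrt P).trace ^ 2 := by
  refine concaveOn_of_le_linearMap convex_setOf_posDef
    (fun S => (CFC.sqrt S).trace • (traceLinearMap n ℝ ℝ ∘ₗ LinearMap.mulLeft ℝ (CFC.sqrt S)⁻¹))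
    (fun S hS T hT => sq_trace_cfcSqrt_le hS hT.posSemidef) fun S hS => ?_
  rw [LinearMap.smul_apply, LinearMap.comp_apply, LinearMap.mulLeft_apply, traceLinearMap_apply,
    trace_inv_cfcSqrt_mul_self hS, smul_eq_mul, sq]

theorem concaveOn_sq_trace_cfcSqrt_conj {C : Matrix n n ℝ} (hC : C.PosDef) :
    ConcaveOn ℝ {X : Matrix n n ℝ | X.PosDef} fun X => (CFC.sqrt (C * X * C)).trace ^ 2 := by
  refine (concaveOn_sq_trace_cfcSqrt.comp_linearMap
    (LinearMap.mulRight ℝ C ∘ₗ LinearMap.mulLeft ℝ C)).subset (fun X hX => ?_) convex_setOf_posDef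
  have := hX.conjTranspose_mul_mul_same (mulVec_injective_of_isUnit hC.isUnit)
  rwa [hC.isHermitian.eq] at this

theorem cfcSqrt_kronecker {m : Type*} [Fintype m] [DecidableEq m] {M : Matrix n n ℝ}
    {N : Matrix m m ℝ} (hM : M.PosSemidef) (hN : N.PosSemidef) :
    CFC.sqrt (M ⊗ₖ N) = CFC.sqrt M ⊗ₖ CFC.sqrt N := by
  refine (CFC.sqrt_eq_iff _ _ (hM.kronecker hN).nonneg
    ((CFC.sqrt_nonneg M).posSemidef.kronecker (CFC.sqrt_nonneg N).posSemidef).nonneg).mpr ?_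
  rw [← mul_kronecker_mul, CFC.sqrt_mul_sqrt_self M hM.nonneg, CFC.sqrt_mul_sqrt_self N hN.nonneg]

end Matrix

section

variable {n : Type*} [Fintype n] [DecidableEq n]

theorem msqrt_eq_cfcSqrt {M : Matrix n n ℝ} (hM : M.PosSemidef) : msqrt M = CFC.sqrt M := by
  rw [CFC.sqrt_eq_cfc, cfc_nnreal_eq_real _ M hM.nonneg, hM.1.cfc_eq, msqrt, dif_pos hM]
  simp only [IsHermitian.cfc, Unitary.conjStarAlgAut_apply]
  congr 3
  ext i
  simp [Real.coe_sqrt, Real.coe_toNNReal', max_eq_left (hM.eigenvalues_nonneg i)]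

theorem trace_msqrt_conj_kronecker_self {A X : Matrix n n ℝ} (hA : A.PosSemidef)
    (hX : X.PosSemidef) :
    (msqrt (msqrt (A ⊗ₖ A) * (X ⊗ₖ X) * msqrt (A ⊗ₖ A))).trace
      = (CFC.sqrt (CFC.sqrt A * X * CFC.sqrt A)).trace ^ 2 := by
  have hconj : (CFC.sqrt A * X * CFC.sqrt A).PosSemidef := by
    have := hX.conjTranspose_mul_mul_same (CFC.sqrt A)
    rwa [conjTranspose_eq_transpose_of_trivial, transpose_cfcSqrt] at this
  rw [msqrt_eq_cfcSqrt (hA.kronecker hA), cfcSqrt_kronecker hA hA, ← mul_kronecker_mul,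
    ← mul_kronecker_mul, msqrt_eq_cfcSqrt (hconj.kronecker hconj), cfcSqrt_kronecker hconj hconj,
    trace_kronecker, sq]

end

/-- **Convexity of the matrix-variate Gaussian Wasserstein barycenter objective.**
Let `A 1, …, A n` be `d × d` real symmetric positive definite matrices.  The function
`F X = ∑ i, [tr(Aᵢ ⊗ Aᵢ) + tr(X ⊗ X) − 2 tr( ((Aᵢ ⊗ Aᵢ)^{1/2} (X ⊗ X) (Aᵢ ⊗ Aᵢ)^{1/2})^{1/2} )]`
is convex on the convex set of `d × d` real symmetric positive definite matrices.
(For real matrices, positive definiteness `Matrix.PosDef` includes symmetry.) -/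
theorem matrix_variate_barycenter_convex {d n : ℕ}
    (A : Fin n → Matrix (Fin d) (Fin d) ℝ) (hA : ∀ i, (A i).PosDef) :
    ConvexOn ℝ {X : Matrix (Fin d) (Fin d) ℝ | X.PosDef}
      (fun X => ∑ i, ((A i ⊗ₖ A i).trace + (X ⊗ₖ X).trace
        - 2 * (msqrt (msqrt (A i ⊗ₖ A i) * (X ⊗ₖ X) * msqrt (A i ⊗ₖ A i))).trace)) := by
  have hs : Convex ℝ {X : Matrix (Fin d) (Fin d) ℝ | X.PosDef} := convex_setOf_posDef
  refine ConvexOn.fun_sum hs _ fun i _ => ?_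
  have hsqrtA : (CFC.sqrt (A i)).PosDef := (hA i).isStrictlyPositive.sqrt.posDef
  have htrace := convexOn_sq_trace.subset (Set.subset_univ _) hs
  refine (((convexOn_const (A i ⊗ₖ A i).trace hs).add htrace).sub
    ((concaveOn_sq_trace_cfcSqrt_conj hsqrtA).smul zero_le_two)).congr fun X hX => ?_
  simp only [Pi.add_apply, Pi.sub_apply, smul_eq_mul, trace_kronecker,
    trace_msqrt_conj_kronecker_self (hA i).posSemidef hX.posSemidef, sq]
end

section
/- Fix γ ∈ (0,1). For all d×d Hermitian positive definite matrices A₁, A₂, B₁, B₂ and every λ ∈ [0,1], one has (λA₁ + (1−λ)A₂)^γ ⊗ (λB₁ + (1−λ)B₂)^{1−γ} ⪰ λ (A₁^γ ⊗ B₁^{1−γ}) + (1−λ) (A₂^γ ⊗ B₂^{1−γ}); that is, the map (A, B) ↦ A^γ ⊗ B^{1−γ} on pairs of Hermitian positive definite matrices is jointly concave with respect to the Löwner order. -/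
open Matrix
open scoped ComplexOrder Kronecker

noncomputable def mpow {d : ℕ} (M : Matrix (Fin d) (Fin d) ℂ) (γ : ℝ) :
    Matrix (Fin d) (Fin d) ℂ :=
  @dite _ (M.IsHermitian) (Classical.dec _)
    (fun h => (h.eigenvectorUnitary : Matrix (Fin d) (Fin d) ℂ) *
      Matrix.diagonal (fun i => ((h.eigenvalues i ^ γ : ℝ) : ℂ)) *
      star (h.eigenvectorUnitary : Matrix (Fin d) (Fin d) ℂ))
    (fun _ => 0)

/-!
Ando's argument. Write `Φ_s = kronPow A B s = A ^ s ⊗ B ^ (1 - s)`. For fixed `A, B` all `Φ_s`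
are diagonal in the Kronecker product of the two eigenbases, and `Φ_{(γ+δ)/2}` is the geometric
mean of the commuting matrices `Φ_γ` and `Φ_δ`: it is the largest Hermitian `X` with
`[[Φ_γ, X], [X, Φ_δ]] ⪰ 0` (Schur complement, then operator monotonicity of the square root).
This block condition survives convex combinations and enlarging the diagonal blocks, so the set of
exponents `s` for which the concavity inequality holds is closed under midpoints. It contains
`0` and `1`, where `Φ` is linear, and is closed since `Φ_s` is continuous in `s`; hence it
contains `[0, 1]`.
-/

open Unitary Filter Topology Set
open scoped MatrixOrder

theorem IsSelfAdjoint.le_of_mul_self_le_mul_self {A : Type*} [CStarAlgebra A] [PartialOrder A]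
    [StarOrderedRing A] {c s : A} (hc : IsSelfAdjoint c) (hs : 0 ≤ s) (h : c * c ≤ s * s) :
    c ≤ s :=
  calc c ≤ CFC.abs c :=
        sub_nonneg.mp (CFC.abs_sub_self c ▸ smul_nonneg zero_le_two (CFC.negPart_nonneg c))
    _ = CFC.sqrt (c * c) := by rw [CFC.abs, hc.star_eq]
    _ ≤ CFC.sqrt (s * s) := CFC.sqrt_le_sqrt _ _ h
    _ = s := CFC.sqrt_mul_self s

theorem Set.Icc_subset_of_isClosed_of_midpoint_mem {S : Set ℝ} (hS : IsClosed S) (h₀ : 0 ∈ S)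
    (h₁ : 1 ∈ S) (hmid : ∀ x ∈ S, ∀ y ∈ S, (x + y) / 2 ∈ S) : Icc 0 1 ⊆ S := by
  have hdyadic (k : ℕ) : ∀ m : ℕ, m ≤ 2 ^ k → (m : ℝ) / 2 ^ k ∈ S := by
    induction k with
    | zero =>
      intro m hm
      interval_cases m <;> simpa
    | succ k ih =>
      intro m hm
      obtain ⟨j, rfl | rfl⟩ := Nat.even_or_odd' m
      · convert ih j (by omega) using 1
        push_cast
        field_simp
        ring
      · convert hmid _ (ih j (by omega)) _ (ih (j + 1) (by omega)) using 1
        push_cast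
        field_simp
        ring
  intro γ ⟨hγ₀, hγ₁⟩
  have hlim : Tendsto (fun k : ℕ => (⌊γ * 2 ^ k⌋₊ : ℝ) / 2 ^ k) atTop (𝓝 γ) :=
    (tendsto_nat_floor_mul_div_atTop hγ₀).comp (tendsto_pow_atTop_atTop_of_one_lt one_lt_two)
  refine hS.mem_of_tendsto hlim (Eventually.of_forall fun k => hdyadic k _ ?_)
  exact Nat.floor_le_of_le (by push_cast; exact mul_le_of_le_one_left (by positivity) hγ₁)

namespace Matrix

theorem PosDef.convexComb {n : Type*} {A B : Matrix n n ℂ} (hA : A.PosDef) (hB : B.PosDef)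
    {t : ℝ} (ht₀ : 0 ≤ t) (ht₁ : t ≤ 1) : (t • A + (1 - t) • B).PosDef := by
  rcases ht₀.eq_or_lt with rfl | ht₀
  · simpa using hB
  · exact (hA.smul ht₀).add_posSemidef (hB.posSemidef.smul (sub_nonneg.2 ht₁))

theorem IsHermitian.smul_add_smul {n : Type*} {A B : Matrix n n ℂ} (hA : A.IsHermitian)
    (hB : B.IsHermitian) (u w : ℝ) : (u • A + w • B).IsHermitian :=
  ((IsSelfAdjoint.all u).smul hA).add ((IsSelfAdjoint.all w).smul hB)

variable {n : Type*} [Fintype n]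

theorem isClosed_setOf_le {X : Type*} [TopologicalSpace X] {f g : X → Matrix n n ℂ}
    (hf : Continuous f) (hg : Continuous g) : IsClosed {x | f x ≤ g x} := by
  have hnonneg : {M : Matrix n n ℂ | 0 ≤ M} =
      {M | Mᴴ = M} ∩ ⋂ v : n → ℂ, {M | 0 ≤ star v ⬝ᵥ (M *ᵥ v)} := by
    ext M
    simp [nonneg_iff_posSemidef, posSemidef_iff_dotProduct_mulVec, IsHermitian]
  have hclosed : IsClosed {M : Matrix n n ℂ | 0 ≤ M} :=
    hnonneg ▸ (isClosed_eq (by fun_prop) continuous_id).inter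
      (isClosed_iInter fun v => isClosed_le continuous_const (by fun_prop))
  simpa only [Set.preimage_ofPred_eq, Pi.sub_apply, sub_nonneg] using
    hclosed.preimage (hg.sub hf)

variable [DecidableEq n]

theorem fromBlocks_nonneg {P Q : Matrix n n ℂ} (hP : 0 ≤ P) (hQ : 0 ≤ Q) :
    0 ≤ fromBlocks P 0 0 Q := by
  obtain ⟨S, rfl⟩ := CStarAlgebra.nonneg_iff_eq_star_mul_self.mp hP
  obtain ⟨T, rfl⟩ := CStarAlgebra.nonneg_iff_eq_star_mul_self.mp hQ
  simpa [star_eq_conjTranspose, fromBlocks_conjTranspose, fromBlocks_multiply] using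
    star_mul_self_nonneg (fromBlocks S 0 0 T)

theorem fromBlocks_star_mul_self_nonneg (M N : Matrix n n ℂ) :
    0 ≤ fromBlocks (star M * M) (star M * N) (star N * M) (star N * N) := by
  simpa [star_eq_conjTranspose, fromBlocks_conjTranspose, fromBlocks_multiply] using
    star_mul_self_nonneg (fromBlocks M N (0 : Matrix n n ℂ) 0)

noncomputable def unitaryDiag (U : unitaryGroup n ℂ) (x : n → ℝ) : Matrix n n ℂ :=
  conjStarAlgAut ℂ _ U (diagonal fun i => (x i : ℂ))

section unitaryDiag

variable (U : unitaryGroup n ℂ)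

theorem unitaryDiag_mul (x y : n → ℝ) :
    unitaryDiag U x * unitaryDiag U y = unitaryDiag U (x * y) := by
  rw [unitaryDiag, unitaryDiag, unitaryDiag, ← map_mul, diagonal_mul_diagonal]
  simp

theorem unitaryDiag_one : unitaryDiag U 1 = 1 := by
  rw [unitaryDiag]
  simp

theorem isSelfAdjoint_unitaryDiag (x : n → ℝ) : IsSelfAdjoint (unitaryDiag U x) := by
  rw [unitaryDiag, IsSelfAdjoint, ← map_star, star_eq_conjTranspose, diagonal_conjTranspose]
  simp [Pi.star_def]

theorem unitaryDiag_nonneg {x : n → ℝ} (hx : 0 ≤ x) : 0 ≤ unitaryDiag U x := by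
  rw [unitaryDiag, conjStarAlgAut_apply]
  refine star_right_conjugate_nonneg (PosSemidef.nonneg (PosSemidef.diagonal fun i => ?_)) _
  exact Complex.zero_le_real.mpr (hx i)

theorem continuous_unitaryDiag : Continuous (unitaryDiag U) := by
  unfold unitaryDiag
  simp only [conjStarAlgAut_apply]
  fun_prop

theorem kronecker_unitaryDiag {m : Type*} [Fintype m] [DecidableEq m] (V : unitaryGroup m ℂ)
    (x : n → ℝ) (y : m → ℝ) :
    unitaryDiag U x ⊗ₖ unitaryDiag V y =
      unitaryDiag ⟨(U : Matrix n n ℂ) ⊗ₖ (V : Matrix m m ℂ),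
        kronecker_mem_unitary U.2 V.2⟩ fun p => x p.1 * y p.2 := by
  rw [unitaryDiag, unitaryDiag, unitaryDiag, conjStarAlgAut_apply, conjStarAlgAut_apply,
    conjStarAlgAut_apply, mul_kronecker_mul, mul_kronecker_mul, diagonal_kronecker_diagonal]
  simp [star_eq_conjTranspose, conjTranspose_kronecker]

theorem fromBlocks_unitaryDiag_nonneg (a b : n → ℝ) :
    0 ≤ fromBlocks (unitaryDiag U (a * a)) (unitaryDiag U (a * b)) (unitaryDiag U (a * b))
      (unitaryDiag U (b * b)) := by
  have h := fromBlocks_star_mul_self_nonneg (unitaryDiag U a) (unitaryDiag U b)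
  rwa [(isSelfAdjoint_unitaryDiag U a).star_eq, (isSelfAdjoint_unitaryDiag U b).star_eq,
    unitaryDiag_mul, unitaryDiag_mul, unitaryDiag_mul, unitaryDiag_mul, mul_comm b] at h

theorem mul_unitaryDiag_mul_le_of_fromBlocks_nonneg {a b : n → ℝ} (ha : ∀ i, a i ≠ 0)
    {X : Matrix n n ℂ} (hX : IsSelfAdjoint X)
    (h : 0 ≤ fromBlocks (unitaryDiag U (a * a)) X X (unitaryDiag U (b * b))) :
    X * unitaryDiag U (a⁻¹ * a⁻¹) * X ≤ unitaryDiag U (b * b) := by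
  have haa : a * a⁻¹ = 1 := funext fun i => mul_inv_cancel₀ (ha i)
  have hinv : unitaryDiag U (a * a) * unitaryDiag U (a⁻¹ * a⁻¹) = 1 := by
    rw [unitaryDiag_mul, mul_mul_mul_comm, haa, one_mul, unitaryDiag_one]
  have := invertibleOfRightInverse _ _ hinv
  have hPD : (unitaryDiag U (a * a)).PosDef :=
    (unitaryDiag_nonneg U fun i => mul_self_nonneg (a i)).posSemidef.posDef_iff_isUnit.mpr
      (isUnit_of_invertible _)
  have hschur := (PosDef.fromBlocks₁₁ X (unitaryDiag U (b * b)) hPD).mp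
    (by rw [← star_eq_conjTranspose, hX.star_eq]; exact h.posSemidef)
  rwa [inv_eq_right_inv hinv, ← star_eq_conjTranspose, hX.star_eq] at hschur

open scoped Matrix.Norms.L2Operator in
theorem le_unitaryDiag_mul_of_mul_le {a b : n → ℝ} (ha : ∀ i, 0 < a i) (hb : 0 ≤ b)
    {X : Matrix n n ℂ} (hX : IsSelfAdjoint X)
    (h : X * unitaryDiag U (a⁻¹ * a⁻¹) * X ≤ unitaryDiag U (b * b)) :
    X ≤ unitaryDiag U (a * b) := by
  have haa : a * a⁻¹ = 1 := funext fun i => mul_inv_cancel₀ (ha i).ne'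
  set R := unitaryDiag U a⁻¹
  have hR : IsSelfAdjoint R := isSelfAdjoint_unitaryDiag U _
  have hsq : R * X * R * (R * X * R) ≤ unitaryDiag U (b * a⁻¹) * unitaryDiag U (b * a⁻¹) :=
    calc R * X * R * (R * X * R) = R * (X * (R * R) * X) * R := by simp only [mul_assoc]
      _ ≤ R * unitaryDiag U (b * b) * R := by
        rw [unitaryDiag_mul]
        exact hR.conjugate_le_conjugate h
      _ = unitaryDiag U (b * a⁻¹) * unitaryDiag U (b * a⁻¹) := by
        simp only [R, unitaryDiag_mul]
        congr 1
        ring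
  have hle : R * X * R ≤ unitaryDiag U (b * a⁻¹) :=
    (hX.conjugate_self hR).le_of_mul_self_le_mul_self
      (unitaryDiag_nonneg U fun i => mul_nonneg (hb i) (inv_nonneg.2 (ha i).le)) hsq
  have haR : unitaryDiag U a * R = 1 := by rw [unitaryDiag_mul, haa, unitaryDiag_one]
  have hRa : R * unitaryDiag U a = 1 := by rw [unitaryDiag_mul, mul_comm, haa, unitaryDiag_one]
  calc X = unitaryDiag U a * (R * X * R) * unitaryDiag U a := by
        simp only [← mul_assoc, haR, one_mul]
        rw [mul_assoc, hRa, mul_one]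
    _ ≤ unitaryDiag U a * unitaryDiag U (b * a⁻¹) * unitaryDiag U a :=
      (isSelfAdjoint_unitaryDiag U a).conjugate_le_conjugate hle
    _ = unitaryDiag U (a * b) := by
      rw [unitaryDiag_mul, unitaryDiag_mul]
      congr 1
      ext i
      simp only [Pi.mul_apply, Pi.inv_apply]
      field_simp [(ha i).ne']

end unitaryDiag

section kronPow

variable {d : ℕ} {A B : Matrix (Fin d) (Fin d) ℂ}

theorem mpow_eq_unitaryDiag (hA : A.IsHermitian) (s : ℝ) :
    mpow A s = unitaryDiag hA.eigenvectorUnitary fun i => hA.eigenvalues i ^ s := by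
  rw [mpow, dif_pos hA]
  rfl

theorem mpow_zero (hA : A.IsHermitian) : mpow A 0 = 1 := by
  rw [mpow_eq_unitaryDiag hA]
  simp only [Real.rpow_zero]
  exact unitaryDiag_one _

theorem mpow_one (hA : A.IsHermitian) : mpow A 1 = A := by
  rw [mpow_eq_unitaryDiag hA]
  conv_rhs => rw [hA.spectral_theorem]
  simp only [Real.rpow_one]
  rfl

noncomputable def kronPow (A B : Matrix (Fin d) (Fin d) ℂ) (s : ℝ) :
    Matrix (Fin d × Fin d) (Fin d × Fin d) ℂ :=
  mpow A s ⊗ₖ mpow B (1 - s)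

theorem exists_kronPow_eq_unitaryDiag (hA : A.PosDef) (hB : B.PosDef) :
    ∃ (W : unitaryGroup (Fin d × Fin d) ℂ) (a b : Fin d × Fin d → ℝ), (∀ p, 0 < a p) ∧
      (∀ p, 0 < b p) ∧ ∀ s, kronPow A B s = unitaryDiag W fun p => a p ^ s * b p ^ (1 - s) :=
  ⟨_, _, _, fun p => hA.eigenvalues_pos p.1, fun p => hB.eigenvalues_pos p.2, fun s => by
    rw [kronPow, mpow_eq_unitaryDiag hA.1, mpow_eq_unitaryDiag hB.1, kronecker_unitaryDiag]⟩

theorem continuous_kronPow (hA : A.PosDef) (hB : B.PosDef) : Continuous (kronPow A B) := by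
  obtain ⟨W, a, b, ha, hb, hW⟩ := exists_kronPow_eq_unitaryDiag hA hB
  rw [funext hW]
  refine (continuous_unitaryDiag W).comp (continuous_pi fun p => ?_)
  exact (continuous_const.rpow continuous_id fun _ => .inl (ha p).ne').mul
    (continuous_const.rpow (continuous_const.sub continuous_id) fun _ => .inl (hb p).ne')

theorem kronPow_nonneg (hA : A.PosDef) (hB : B.PosDef) (s : ℝ) : 0 ≤ kronPow A B s := by
  obtain ⟨W, a, b, ha, hb, hW⟩ := exists_kronPow_eq_unitaryDiag hA hB
  rw [hW]
  exact unitaryDiag_nonneg W fun p =>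
    (mul_pos (Real.rpow_pos_of_pos (ha p) _) (Real.rpow_pos_of_pos (hb p) _)).le

theorem exists_kronPow_midpoint_eq_unitaryDiag (hA : A.PosDef) (hB : B.PosDef) :
    ∃ (W : unitaryGroup (Fin d × Fin d) ℂ) (g : ℝ → Fin d × Fin d → ℝ),
      (∀ s p, 0 < g s p) ∧ ∀ s r, kronPow A B ((s + r) / 2) = unitaryDiag W (g s * g r) := by
  obtain ⟨W, a, b, ha, hb, hW⟩ := exists_kronPow_eq_unitaryDiag hA hB
  refine ⟨W, fun s p => a p ^ (s / 2) * b p ^ ((1 - s) / 2), fun s p =>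
    mul_pos (Real.rpow_pos_of_pos (ha p) _) (Real.rpow_pos_of_pos (hb p) _), fun s r => ?_⟩
  rw [hW]
  congr 1
  ext p
  simp only [Pi.mul_apply]
  rw [mul_mul_mul_comm, ← Real.rpow_add (ha p), ← Real.rpow_add (hb p)]
  ring_nf

theorem fromBlocks_kronPow_nonneg (hA : A.PosDef) (hB : B.PosDef) (γ δ : ℝ) :
    0 ≤ fromBlocks (kronPow A B γ) (kronPow A B ((γ + δ) / 2)) (kronPow A B ((γ + δ) / 2))
      (kronPow A B δ) := by
  obtain ⟨W, g, -, hW⟩ := exists_kronPow_midpoint_eq_unitaryDiag hA hB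
  have h := fromBlocks_unitaryDiag_nonneg W (g γ) (g δ)
  rwa [← hW γ γ, ← hW γ δ, ← hW δ δ, add_self_div_two, add_self_div_two] at h

theorem le_kronPow_midpoint (hA : A.PosDef) (hB : B.PosDef) {γ δ : ℝ}
    {X : Matrix (Fin d × Fin d) (Fin d × Fin d) ℂ} (hX : IsSelfAdjoint X)
    (h : 0 ≤ fromBlocks (kronPow A B γ) X X (kronPow A B δ)) :
    X ≤ kronPow A B ((γ + δ) / 2) := by
  obtain ⟨W, g, hg, hW⟩ := exists_kronPow_midpoint_eq_unitaryDiag hA hB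
  rw [← add_self_div_two γ, ← add_self_div_two δ, hW, hW] at h
  rw [hW]
  exact le_unitaryDiag_mul_of_mul_le W (hg γ) (fun p => (hg δ p).le) hX
    (mul_unitaryDiag_mul_le_of_fromBlocks_nonneg W (fun p => (hg γ p).ne') hX h)

variable {A₁ A₂ B₁ B₂ : Matrix (Fin d) (Fin d) ℂ}

theorem smul_add_smul_kronPow_zero (hA₁ : A₁.IsHermitian) (hA₂ : A₂.IsHermitian)
    (hB₁ : B₁.IsHermitian) (hB₂ : B₂.IsHermitian) (u w : ℝ) :
    u • kronPow A₁ B₁ 0 + w • kronPow A₂ B₂ 0 =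
      kronPow (u • A₁ + w • A₂) (u • B₁ + w • B₂) 0 := by
  simp only [kronPow, sub_zero, mpow_zero hA₁, mpow_zero hA₂,
    mpow_zero (hA₁.smul_add_smul hA₂ u w), mpow_one hB₁, mpow_one hB₂,
    mpow_one (hB₁.smul_add_smul hB₂ u w), kronecker_add, kronecker_smul]

theorem smul_add_smul_kronPow_one (hA₁ : A₁.IsHermitian) (hA₂ : A₂.IsHermitian)
    (hB₁ : B₁.IsHermitian) (hB₂ : B₂.IsHermitian) (u w : ℝ) :
    u • kronPow A₁ B₁ 1 + w • kronPow A₂ B₂ 1 =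
      kronPow (u • A₁ + w • A₂) (u • B₁ + w • B₂) 1 := by
  simp only [kronPow, sub_self, mpow_zero hB₁, mpow_zero hB₂,
    mpow_zero (hB₁.smul_add_smul hB₂ u w), mpow_one hA₁, mpow_one hA₂,
    mpow_one (hA₁.smul_add_smul hA₂ u w), add_kronecker, smul_kronecker]

theorem smul_add_smul_kronPow_midpoint_le (hA₁ : A₁.PosDef) (hA₂ : A₂.PosDef)
    (hB₁ : B₁.PosDef) (hB₂ : B₂.PosDef) (hA : A.PosDef) (hB : B.PosDef) {u w : ℝ}
    (hu : 0 ≤ u) (hw : 0 ≤ w) {γ δ : ℝ}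
    (hγ : u • kronPow A₁ B₁ γ + w • kronPow A₂ B₂ γ ≤ kronPow A B γ)
    (hδ : u • kronPow A₁ B₁ δ + w • kronPow A₂ B₂ δ ≤ kronPow A B δ) :
    u • kronPow A₁ B₁ ((γ + δ) / 2) + w • kronPow A₂ B₂ ((γ + δ) / 2) ≤
      kronPow A B ((γ + δ) / 2) := by
  have hnonneg := add_nonneg (smul_nonneg hu (kronPow_nonneg hA₁ hB₁ ((γ + δ) / 2)))
    (smul_nonneg hw (kronPow_nonneg hA₂ hB₂ ((γ + δ) / 2)))
  refine le_kronPow_midpoint hA hB (IsSelfAdjoint.of_nonneg hnonneg) ?_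
  have h := add_nonneg (add_nonneg (smul_nonneg hu (fromBlocks_kronPow_nonneg hA₁ hB₁ γ δ))
    (smul_nonneg hw (fromBlocks_kronPow_nonneg hA₂ hB₂ γ δ)))
    (fromBlocks_nonneg (sub_nonneg.2 hγ) (sub_nonneg.2 hδ))
  convert h using 1
  simp only [fromBlocks_smul, fromBlocks_add]
  congr 1 <;> abel

end kronPow

end Matrix

/-- **Ando–Lieb theorem.**  Fix `γ ∈ (0,1)`.  For all `d × d` Hermitian positive definite
complex matrices `A₁, A₂, B₁, B₂` and every `t ∈ [0,1]`,
`(t A₁ + (1−t) A₂)^γ ⊗ (t B₁ + (1−t) B₂)^{1−γ} ⪰ t (A₁^γ ⊗ B₁^{1−γ}) + (1−t) (A₂^γ ⊗ B₂^{1−γ})`,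
i.e. the map `(A, B) ↦ A^γ ⊗ B^{1−γ}` is jointly concave w.r.t. the Löwner order. -/
theorem ando_lieb {d : ℕ} (γ : ℝ) (hγ : γ ∈ Set.Ioo (0 : ℝ) 1)
    (A₁ A₂ B₁ B₂ : Matrix (Fin d) (Fin d) ℂ)
    (hA₁ : A₁.PosDef) (hA₂ : A₂.PosDef) (hB₁ : B₁.PosDef) (hB₂ : B₂.PosDef)
    (t : ℝ) (ht : t ∈ Set.Icc (0 : ℝ) 1) :
    (mpow (t • A₁ + (1 - t) • A₂) γ ⊗ₖ mpow (t • B₁ + (1 - t) • B₂) (1 - γ)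
      - (t • (mpow A₁ γ ⊗ₖ mpow B₁ (1 - γ)) + (1 - t) • (mpow A₂ γ ⊗ₖ mpow B₂ (1 - γ)))).PosSemidef := by
  have hA := hA₁.convexComb hA₂ ht.1 ht.2
  have hB := hB₁.convexComb hB₂ ht.1 ht.2
  have hconcave : Icc 0 1 ⊆ {s | t • kronPow A₁ B₁ s + (1 - t) • kronPow A₂ B₂ s ≤
      kronPow (t • A₁ + (1 - t) • A₂) (t • B₁ + (1 - t) • B₂) s} :=
    Icc_subset_of_isClosed_of_midpoint_mem
      (isClosed_setOf_le (((continuous_kronPow hA₁ hB₁).const_smul t).add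
        ((continuous_kronPow hA₂ hB₂).const_smul (1 - t))) (continuous_kronPow hA hB))
      (smul_add_smul_kronPow_zero hA₁.1 hA₂.1 hB₁.1 hB₂.1 t (1 - t)).le
      (smul_add_smul_kronPow_one hA₁.1 hA₂.1 hB₁.1 hB₂.1 t (1 - t)).le
      fun _ hr _ hs => smul_add_smul_kronPow_midpoint_le hA₁ hA₂ hB₁ hB₂ hA hB ht.1
        (sub_nonneg.2 ht.2) hr hs
  exact hconcave ⟨hγ.1.le, hγ.2.le⟩
end
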